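/- arXiv:2205.01808 — 2 statements merged into one kernel-verified Lean document; each statement's English description precedes it below -/
import Mathlib

section
/- Assume λ < 0 and μ > 0, and let C := C_A(P⁺, v(u⁻)) ∪ C_A(P⁻, v(u⁺)). Then for every v ∈ ℝ² \ C and every u ∈ Ω = [u⁻, u⁺]: (a) dist(φ(s, v, u), C) ≤ e^{sλ} dist(v, C) for all s ≥ 0, and (b) dist(φ(s, v, u), C) ≥ e^{sλ} dist(v, C) for all s ≤ 0, where dist(w, C) := inf_{c ∈ C} |w − c|. -/
noncomputable section

open Real Set RealInnerProductSpace

/-- The Euclidean plane. -/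
abbrev E2 : Type := EuclideanSpace ℝ (Fin 2)

/-- The vector `(a, b)` in the Euclidean plane. -/
def vec2 (a b : ℝ) : E2 := WithLp.toLp 2 ![a, b]

/-- Counterclockwise rotation of angle `φ`. -/
def rotMap (φ : ℝ) (v : E2) : E2 :=
  vec2 (Real.cos φ * v 0 - Real.sin φ * v 1) (Real.sin φ * v 0 + Real.cos φ * v 1)

/-- `θ`, the counterclockwise rotation by `π/2`. -/
def thetaMap (v : E2) : E2 := vec2 (-(v 1)) (v 0)

/-- The linear map with matrix `A = ((l, -m), (m, l))`. -/
def Amap (l m : ℝ) (v : E2) : E2 := vec2 (l * v 0 - m * v 1) (m * v 0 + l * v 1)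

/-- The inverse `A⁻¹` of the matrix `A = ((l, -m), (m, l))` (with `det A = l² + m² ≠ 0`). -/
def AinvMap (l m : ℝ) (v : E2) : E2 :=
  (1 / (l ^ 2 + m ^ 2)) • vec2 (l * v 0 + m * v 1) (-m * v 0 + l * v 1)

/-- The matrix exponential `e^{τA} = e^{τl} R_{τm}` for `A = ((l, -m), (m, l))`. -/
def expA (l m τ : ℝ) (v : E2) : E2 := Real.exp (τ * l) • rotMap (τ * m) v

/-- The equilibrium `v(u) = -u A⁻¹ η`. -/
def equil (l m : ℝ) (η : E2) (u : ℝ) : E2 := (-u) • AinvMap l m η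

/-- The solution `φ(s, v, u) = e^{sA}(v - v(u)) + v(u)` of `ẋ = Ax + uη` for constant control. -/
def phi (l m : ℝ) (η : E2) (s : ℝ) (v : E2) (u : ℝ) : E2 :=
  expA l m s (v - equil l m η u) + equil l m η u

/-- The spiral `φ_A(τ, v₁, v₂) = e^{τA}(v₁ - v₂) + v₂`. -/
def phiA (l m : ℝ) (τ : ℝ) (v₁ v₂ : E2) : E2 := expA l m τ (v₁ - v₂) + v₂

/-- The region `C_A(v₁, v₂)`. -/
def CA (l m : ℝ) (v₁ v₂ : E2) : Set E2 :=
  {v | 0 ≤ ⟪v - v₂, thetaMap (v₁ - v₂)⟫ ∧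
    ∀ τ ∈ Icc (0 : ℝ) (π / m),
      0 ≤ ⟪v - phiA l m τ v₁ v₂, thetaMap (Amap l m (expA l m τ (v₁ - v₂)))⟫}

/-- Concatenated solution associated to a finite list of (time, control) pairs. -/
def trajComp (l m : ℝ) (η : E2) : E2 → List (ℝ × ℝ) → E2
  | v, [] => v
  | v, p :: rest => trajComp l m η (phi l m η p.1 v p.2) rest

/-- The forward reachable set `R⁺(v)`. -/
def ReachPlus (l m : ℝ) (η : E2) (Ω : Set ℝ) (v : E2) : Set E2 :=
  {w | ∃ L : List (ℝ × ℝ), (∀ p ∈ L, 0 ≤ p.1 ∧ p.2 ∈ Ω) ∧ w = trajComp l m η v L}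

/-- The backward reachable set `R⁻(v)` (forward reachable set of the time-reversed system). -/
def ReachMinus (l m : ℝ) (η : E2) (Ω : Set ℝ) (v : E2) : Set E2 :=
  {w | ∃ L : List (ℝ × ℝ), (∀ p ∈ L, p.1 ≤ 0 ∧ p.2 ∈ Ω) ∧ w = trajComp l m η v L}

/-- An admissible trajectory of the system starting at `v`. -/
def IsAdmissibleTraj (l m : ℝ) (η : E2) (Ω : Set ℝ) (v : E2) (x : ℝ → E2) : Prop :=
  x 0 = v ∧
  ∃ t : ℕ → ℝ, t 0 = 0 ∧ StrictMono t ∧ (∀ M : ℝ, ∃ n, M < t n) ∧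
    ∃ u : ℕ → ℝ, (∀ k, u k ∈ Ω) ∧
      ∀ k, ∀ s ∈ Icc (t k) (t (k + 1)), x s = phi l m η (s - t k) (x (t k)) (u k)

/-- An admissible trajectory of the time-reversed system starting at `v`. -/
def IsAdmissibleTrajRev (l m : ℝ) (η : E2) (Ω : Set ℝ) (v : E2) (x : ℝ → E2) : Prop :=
  x 0 = v ∧
  ∃ t : ℕ → ℝ, t 0 = 0 ∧ StrictMono t ∧ (∀ M : ℝ, ∃ n, M < t n) ∧
    ∃ u : ℕ → ℝ, (∀ k, u k ∈ Ω) ∧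
      ∀ k, ∀ s ∈ Icc (t k) (t (k + 1)), x s = phi l m η (-(s - t k)) (x (t k)) (u k)

/-- Conditions (a) and (b) of the definition of a control set. -/
def ControlSetAxioms (l m : ℝ) (η : E2) (Ω : Set ℝ) (D : Set E2) : Prop :=
  (∀ v ∈ D, ∃ x : ℝ → E2, IsAdmissibleTraj l m η Ω v x ∧ ∀ s : ℝ, 0 ≤ s → x s ∈ D) ∧
  ∀ v ∈ D, D ⊆ closure (ReachPlus l m η Ω v)

/-- A control set: a set satisfying (a) and (b), maximal with respect to set inclusion. -/
def IsControlSet (l m : ℝ) (η : E2) (Ω : Set ℝ) (D : Set E2) : Prop :=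
  ControlSetAxioms l m η Ω D ∧
    ∀ D' : Set E2, ControlSetAxioms l m η Ω D' → D ⊆ D' → D' = D

/-- Conditions (a) and (b) of the definition of a control set of the time-reversed system. -/
def ControlSetAxiomsRev (l m : ℝ) (η : E2) (Ω : Set ℝ) (D : Set E2) : Prop :=
  (∀ v ∈ D, ∃ x : ℝ → E2, IsAdmissibleTrajRev l m η Ω v x ∧ ∀ s : ℝ, 0 ≤ s → x s ∈ D) ∧
  ∀ v ∈ D, D ⊆ closure (ReachMinus l m η Ω v)

/-- A control set of the time-reversed system. -/
def IsControlSetRev (l m : ℝ) (η : E2) (Ω : Set ℝ) (D : Set E2) : Prop :=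
  ControlSetAxiomsRev l m η Ω D ∧
    ∀ D' : Set E2, ControlSetAxiomsRev l m η Ω D' → D ⊆ D' → D' = D

/-- `ρ = e^{πλ/μ}`. -/
def rho (l m : ℝ) : ℝ := Real.exp (π * l / m)

/-- The point `P⁺ = ((-u⁺ + ρ u⁻)/(1 - ρ)) A⁻¹ η`. -/
def Pplus (l m : ℝ) (η : E2) (um up : ℝ) : E2 :=
  ((-up + rho l m * um) / (1 - rho l m)) • AinvMap l m η

/-- The point `P⁻ = ((-u⁻ + ρ u⁺)/(1 - ρ)) A⁻¹ η`. -/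
def Pminus (l m : ℝ) (η : E2) (um up : ℝ) : E2 :=
  ((-um + rho l m * up) / (1 - rho l m)) • AinvMap l m η

/-- The region `C = C_A(P⁺, v(u⁻)) ∪ C_A(P⁻, v(u⁺))`. -/
def regionC (l m : ℝ) (η : E2) (um up : ℝ) : Set E2 :=
  CA l m (Pplus l m η um up) (equil l m η um) ∪ CA l m (Pminus l m η um up) (equil l m η up)

/-- The sequence `P₀ = v(u⁺)`, `P_{2n+1} = φ(π/μ, P_{2n}, u⁻)`, `P_{2n+2} = φ(π/μ, P_{2n+1}, u⁺)`. -/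
def Pseq (l m : ℝ) (η : E2) (um up : ℝ) : ℕ → E2
  | 0 => equil l m η up
  | n + 1 => phi l m η (π / m) (Pseq l m η um up n) (if n % 2 = 0 then um else up)

/-- The periodic orbit `O`. -/
def orbitO (l m : ℝ) (η : E2) (um up : ℝ) : Set E2 :=
  (fun s => phi l m η s (Pplus l m η um up) um) '' Icc (0 : ℝ) (π / m) ∪
    (fun s => phi l m η s (Pminus l m η um up) up) '' Icc (0 : ℝ) (π / m)


/-!
For a fixed control `u`, `e^{sA}` is `e^{sλ}` times a rotation, so `v ↦ φ(s, v, u)` multiplies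
all distances by `e^{sλ}`. Once `C` is forward invariant under each of these flows, the
infimum defining `dist(φ(s, v, u), C)` runs over a superset of `φ(s, C, u)`, which gives (a);
(b) is (a) applied backwards from `φ(s, v, u)`.

For the invariance put `b = A⁻¹η`, `ū = (u⁻ + u⁺)/2`, take `X + iY = (v - v(ū)) · conj b` as
coordinates and `t = μs` as time. The flow becomes `z ↦ e^{(a+i)t}(z + N) - N` with
`a = λ/μ` and `N = (u - ū)|b|²`, so `|N| ≤ K = (u⁺ - u⁻)|b|²/2`; `C_A(P⁺, v(u⁻))` becomes
`{Y ≤ 0}` intersected with the half-planes `tangentForm a K · t ≤ D e^{at}`, `t ∈ [0, π]`,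
and `C_A(P⁻, v(u⁺))` its reflection through the origin. Comparing with the tangents at
`t = 0` and `t = π` shows that `C` is the set of points `p` such that `p` and `-p` satisfy all
these inequalities. Each of them survives the flow for a time `s ≤ π`: it follows from the
inequality at `t - s` (or, for `t < s`, from that of `-p` at `t - s + π`) together with the
monotonicity of `e^{-at}(cos t + a sin t)` on `[0, π]`.
-/

theorem Metric.infDist_apply_le_of_mapsTo {α : Type*} [PseudoMetricSpace α] {f : α → α}
    {s : Set α} {K : ℝ} (hK : 0 ≤ K) (hs : MapsTo f s s) (x : α)
    (hf : ∀ y ∈ s, dist (f x) (f y) ≤ K * dist x y) :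
    Metric.infDist (f x) s ≤ K * Metric.infDist x s := by
  rcases s.eq_empty_or_nonempty with rfl | hne
  · simp
  have : Nonempty s := hne.to_subtype
  conv_rhs => rw [Metric.infDist_eq_iInf, Real.mul_iInf_of_nonneg hK]
  refine le_ciInf fun y => ?_
  exact (Metric.infDist_le_dist_of_mem (hs y.2)).trans (hf y y.2)

theorem hasDerivAt_exp_neg_mul_mul_cos_add_mul_sin (a t : ℝ) :
    HasDerivAt (fun t => exp (-(a * t)) * (cos t + a * sin t))
      (-(1 + a ^ 2) * exp (-(a * t)) * sin t) t := by
  have hlin : HasDerivAt (fun t => -(a * t)) (-a) t := by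
    simpa using ((hasDerivAt_id t).const_mul a).fun_neg
  have htrig : HasDerivAt (fun t => cos t + a * sin t) (-sin t + a * cos t) t :=
    (hasDerivAt_cos t).add ((hasDerivAt_sin t).const_mul a)
  exact (hlin.exp.mul htrig).congr_deriv (by ring)

theorem antitoneOn_exp_neg_mul_mul_cos_add_mul_sin (a : ℝ) :
    AntitoneOn (fun t => exp (-(a * t)) * (cos t + a * sin t)) (Icc 0 π) := by
  refine antitoneOn_of_deriv_nonpos (convex_Icc 0 π) (by fun_prop)
    (fun t _ => (hasDerivAt_exp_neg_mul_mul_cos_add_mul_sin a t).differentiableAt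
      |>.differentiableWithinAt) fun t ht => ?_
  rw [interior_Icc] at ht
  rw [(hasDerivAt_exp_neg_mul_mul_cos_add_mul_sin a t).deriv]
  have := sin_nonneg_of_nonneg_of_le_pi ht.1.le ht.2.le
  have : 0 ≤ (1 + a ^ 2) * exp (-(a * t)) * sin t := by positivity
  linarith

theorem cos_add_mul_sin_le_exp_mul_sub {a s t : ℝ} (hs : 0 ≤ s) (hst : s ≤ t) (ht : t ≤ π) :
    cos t + a * sin t ≤ exp (a * (t - s)) * (cos s + a * sin s) := by
  have h := antitoneOn_exp_neg_mul_mul_cos_add_mul_sin a ⟨hs, hst.trans ht⟩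
    ⟨hs.trans hst, ht⟩ hst
  have hsplit : exp (a * (t - s)) = exp (a * t) * exp (-(a * s)) := by
    rw [← exp_add]; ring_nf
  calc cos t + a * sin t = exp (a * t) * (exp (-(a * t)) * (cos t + a * sin t)) := by
        rw [← mul_assoc, ← exp_add, add_neg_cancel, exp_zero, one_mul]
    _ ≤ exp (a * t) * (exp (-(a * s)) * (cos s + a * sin s)) := by gcongr
    _ = exp (a * (t - s)) * (cos s + a * sin s) := by rw [hsplit]; ring

theorem cos_add_mul_sin_le_exp {a t : ℝ} (ht₀ : -π ≤ t) (ht : t ≤ π) :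
    cos t + a * sin t ≤ exp (a * t) := by
  rcases le_total 0 t with h | h
  · simpa using cos_add_mul_sin_le_exp_mul_sub (a := a) le_rfl h ht
  · have := cos_add_mul_sin_le_exp_mul_sub (a := -a) le_rfl (neg_nonneg.2 h) (by linarith)
    simpa [cos_neg, sin_neg, mul_comm] using this

theorem neg_cos_add_mul_sin_le_exp {a t : ℝ} (ht₀ : 0 ≤ t) (ht : t ≤ π) :
    -(cos t + a * sin t) ≤ exp (a * (t - π)) := by
  have h := cos_add_mul_sin_le_exp_mul_sub (a := a) ht₀ ht le_rfl
  rw [cos_pi, sin_pi, mul_zero, add_zero] at h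
  have hprod : exp (a * (t - π)) * exp (a * (π - t)) = 1 := by
    rw [← exp_add]; ring_nf; exact exp_zero
  nlinarith [exp_pos (a * (t - π))]

namespace Spiral

variable {a K D N : ℝ}

def tangentForm (a K : ℝ) (p : ℝ × ℝ) (t : ℝ) : ℝ :=
  -(cos t + a * sin t) * (p.1 - K) + (a * cos t - sin t) * p.2

def UnderTangents (a K D : ℝ) (p : ℝ × ℝ) : Prop :=
  ∀ t ∈ Icc 0 π, tangentForm a K p t ≤ D * exp (a * t)

def InRegion (a K D : ℝ) (p : ℝ × ℝ) : Prop :=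
  UnderTangents a K D p ∧ UnderTangents a K D (-p)

def flow (a N t : ℝ) (p : ℝ × ℝ) : ℝ × ℝ :=
  (exp (a * t) * (cos t * (p.1 + N) - sin t * p.2) - N,
    exp (a * t) * (sin t * (p.1 + N) + cos t * p.2))

theorem flow_zero (a N : ℝ) (p : ℝ × ℝ) : flow a N 0 p = p := by
  simp [flow]

theorem flow_flow (a N s t : ℝ) (p : ℝ × ℝ) : flow a N t (flow a N s p) = flow a N (s + t) p := by
  simp only [flow, mul_add, exp_add, cos_add, sin_add, Prod.mk.injEq]
  constructor <;> ring

theorem flow_neg (a N t : ℝ) (p : ℝ × ℝ) : flow a (-N) t (-p) = -flow a N t p := by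
  simp only [flow, Prod.fst_neg, Prod.snd_neg, Prod.neg_mk, Prod.mk.injEq]
  constructor <;> ring

theorem tangentForm_flow (a K N s t : ℝ) (p : ℝ × ℝ) :
    tangentForm a K (flow a N s p) t = exp (a * s) * tangentForm a K p (t - s) +
      (N + K) * (cos t + a * sin t - exp (a * s) * (cos (t - s) + a * sin (t - s))) := by
  simp only [tangentForm, flow, cos_sub, sin_sub]
  ring

theorem tangentForm_neg_add_pi (a K t : ℝ) (p : ℝ × ℝ) :
    tangentForm a K (-p) (t + π) = tangentForm a K p t - 2 * K * (cos t + a * sin t) := by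
  simp only [tangentForm, cos_add_pi, sin_add_pi, Prod.fst_neg, Prod.snd_neg]
  ring

theorem underTangents_iff_of_eq_smul {K' D' r : ℝ} {p q : ℝ × ℝ} (hr : 0 < r) (hD : D = r * D')
    (h₁ : p.1 - K = r * (q.1 - K')) (h₂ : p.2 = r * q.2) :
    UnderTangents a K D p ↔ UnderTangents a K' D' q := by
  have hform (t : ℝ) : tangentForm a K p t = r * tangentForm a K' q t := by
    simp only [tangentForm, h₁, h₂]; ring
  refine forall₂_congr fun t _ => ?_
  rw [hform, hD, mul_assoc, mul_le_mul_iff_right₀ hr]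

theorem nonneg_of_two_mul_eq_mul_one_sub_exp (ha : a < 0) (hK : 0 ≤ K)
    (hD : 2 * K = D * (1 - exp (a * π))) : 0 ≤ D := by
  have : exp (a * π) < 1 := exp_lt_one_iff.2 (mul_neg_of_neg_of_pos ha pi_pos)
  nlinarith

theorem underTangents_neg (ha : a < 0) (hK : 0 ≤ K) (hD : 2 * K = D * (1 - exp (a * π)))
    {p : ℝ × ℝ} (hp₂ : p.2 ≤ 0) (hp : UnderTangents a K D p) :
    UnderTangents a K D (-p) := by
  have hD₀ := nonneg_of_two_mul_eq_mul_one_sub_exp ha hK hD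
  intro t ht
  have h₀ := hp 0 ⟨le_rfl, pi_pos.le⟩
  have hπ := hp π ⟨pi_pos.le, le_rfl⟩
  simp only [tangentForm, cos_zero, sin_zero, cos_pi, sin_pi, exp_zero, mul_zero, mul_one,
    add_zero, sub_zero, mul_neg, neg_mul, one_mul, neg_neg] at h₀ hπ
  set c := cos t + a * sin t
  -- the `p.2`-terms combine to `(1 + a²) sin t · p.2 ≤ 0`
  have hsin : 0 ≤ (1 + a ^ 2) * sin t := by
    have := sin_nonneg_of_nonneg_of_le_pi ht.1 ht.2; positivity
  have hform : tangentForm a K (-p) t ≤ c * (p.1 - K - a * p.2) + 2 * K * c := by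
    simp only [tangentForm, Prod.fst_neg, Prod.snd_neg]
    linear_combination mul_nonneg hsin (neg_nonneg.2 hp₂)
  rcases le_total 0 c with hc | hc
  · have h₁ : c * (p.1 - K - a * p.2) ≤ c * (D * exp (a * π)) :=
      mul_le_mul_of_nonneg_left (by linarith) hc
    have h₂ := mul_le_mul_of_nonneg_left
      (cos_add_mul_sin_le_exp (a := a) (by linarith [ht.1, pi_pos]) ht.2) hD₀
    linear_combination hform + h₁ + h₂ + c * hD
  · have hexp : exp (a * π) * exp (a * (t - π)) = exp (a * t) := by rw [← exp_add]; ring_nf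
    have h₁ : c * (p.1 - K - a * p.2) ≤ c * -D := mul_le_mul_of_nonpos_left (by linarith) hc
    have h₂ := mul_le_mul_of_nonneg_left (neg_cos_add_mul_sin_le_exp (a := a) ht.1 ht.2)
      (mul_nonneg hD₀ (exp_pos (a * π)).le)
    linear_combination hform + h₁ + h₂ + c * hD + D * hexp

theorem underTangents_flow (hD : 2 * K = D * (1 - exp (a * π)))
    {p : ℝ × ℝ} (hN : |N| ≤ K) {s : ℝ} (hs : s ∈ Icc 0 π)
    (hp : InRegion a K D p) : UnderTangents a K D (flow a N s p) := by
  obtain ⟨hN₁, hN₂⟩ := abs_le.1 hN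
  intro t ht
  have hexp : exp (a * s) * exp (a * (t - s)) = exp (a * t) := by rw [← exp_add]; ring_nf
  rw [tangentForm_flow]
  rcases le_total s t with hst | hts
  · have h₁ := mul_le_mul_of_nonneg_left (hp.1 (t - s) ⟨by linarith, by linarith [hs.1, ht.2]⟩)
      (exp_pos (a * s)).le
    have h₂ := mul_le_mul_of_nonneg_left
      (cos_add_mul_sin_le_exp_mul_sub (a := a) (by linarith : 0 ≤ t - s) (by linarith [hs.1]) ht.2)
      (by linarith : 0 ≤ N + K)
    rw [sub_sub_cancel] at h₂
    linear_combination h₁ + h₂ + D * hexp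
  · -- for `t < s` the relevant tangent is the one of `-p` at `t - s + π`
    have h₁ := hp.2 (t - s + π) ⟨by linarith [ht.1, hs.2], by linarith [ht.1]⟩
    rw [tangentForm_neg_add_pi] at h₁
    have h₁' := mul_le_mul_of_nonneg_left h₁ (exp_pos (a * s)).le
    have h₂ := mul_le_mul_of_nonneg_left
      (cos_add_mul_sin_le_exp (a := a) (t := t - s) (by linarith [hs.2, ht.1])
        (by linarith [hs.1, ht.2]))
      (mul_nonneg (by linarith : 0 ≤ K - N) (exp_pos (a * s)).le)
    have h₃ := mul_le_mul_of_nonneg_left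
      (cos_add_mul_sin_le_exp (a := a) (by linarith [ht.1, pi_pos]) ht.2) (by linarith : 0 ≤ N + K)
    have hexp' : exp (a * (t - s + π)) = exp (a * π) * exp (a * (t - s)) := by
      rw [← exp_add]; ring_nf
    rw [hexp'] at h₁'
    linear_combination h₁' + h₂ + h₃ + exp (a * t) * hD + (K - N + D * exp (a * π)) * hexp

theorem inRegion_flow_of_mem_Icc (hD : 2 * K = D * (1 - exp (a * π)))
    {p : ℝ × ℝ} (hN : |N| ≤ K) {s : ℝ} (hs : s ∈ Icc 0 π)
    (hp : InRegion a K D p) : InRegion a K D (flow a N s p) := by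
  refine ⟨underTangents_flow hD hN hs hp, ?_⟩
  rw [← flow_neg]
  exact underTangents_flow hD (by rwa [abs_neg]) hs ⟨hp.2, by rw [neg_neg]; exact hp.1⟩

theorem inRegion_flow (hD : 2 * K = D * (1 - exp (a * π)))
    {p : ℝ × ℝ} (hN : |N| ≤ K) {s : ℝ} (hs : 0 ≤ s)
    (hp : InRegion a K D p) : InRegion a K D (flow a N s p) := by
  obtain ⟨n, hn⟩ := exists_nat_ge (s / π)
  rw [div_le_iff₀ pi_pos] at hn
  induction n generalizing s p with
  | zero => rw [le_antisymm (by simpa using hn) hs, flow_zero]; exact hp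
  | succ n ih =>
    rcases le_total s π with hsπ | hπs
    · exact inRegion_flow_of_mem_Icc hD hN ⟨hs, hsπ⟩ hp
    · rw [← add_sub_cancel π s, ← flow_flow]
      exact ih (by linarith) (inRegion_flow_of_mem_Icc hD hN ⟨pi_pos.le, le_rfl⟩ hp)
        (by push_cast at hn; linarith)

theorem inRegion_iff (ha : a < 0) (hK : 0 ≤ K) (hD : 2 * K = D * (1 - exp (a * π)))
    {p : ℝ × ℝ} :
    InRegion a K D p ↔
      p.2 ≤ 0 ∧ UnderTangents a K D p ∨ 0 ≤ p.2 ∧ UnderTangents a K D (-p) := by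
  refine ⟨fun hp => (le_total p.2 0).imp (⟨·, hp.1⟩) (⟨·, hp.2⟩), ?_⟩
  rintro (⟨hp₂, hp⟩ | ⟨hp₂, hp⟩)
  · exact ⟨hp, underTangents_neg ha hK hD hp₂ hp⟩
  · have := underTangents_neg ha hK hD (by simpa using hp₂) hp
    rw [neg_neg] at this
    exact ⟨this, hp⟩

end Spiral

theorem E2.inner_eq (x y : E2) : ⟪x, y⟫ = x 0 * y 0 + x 1 * y 1 := by
  simp [PiLp.inner_apply, Fin.sum_univ_two, mul_comm]

section LinearFlow

variable {l m : ℝ}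

theorem norm_rotMap (φ : ℝ) (v : E2) : ‖rotMap φ v‖ = ‖v‖ := by
  rw [EuclideanSpace.norm_eq, EuclideanSpace.norm_eq]
  congr 1
  simp only [rotMap, vec2, Fin.sum_univ_two, Real.norm_eq_abs, sq_abs, PiLp.toLp_apply,
    Matrix.cons_val_zero, Matrix.cons_val_one]
  linear_combination (v 0 ^ 2 + v 1 ^ 2) * sin_sq_add_cos_sq φ

theorem norm_expA (τ : ℝ) (v : E2) : ‖expA l m τ v‖ = exp (τ * l) * ‖v‖ := by
  rw [expA, norm_smul, norm_rotMap, Real.norm_of_nonneg (exp_pos _).le]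

theorem expA_sub (τ : ℝ) (v w : E2) : expA l m τ v - expA l m τ w = expA l m τ (v - w) := by
  ext i
  fin_cases i <;>
  · simp only [expA, rotMap, vec2, PiLp.sub_apply, PiLp.smul_apply, smul_eq_mul, Fin.zero_eta,
      Fin.mk_one, Matrix.cons_val_zero, Matrix.cons_val_one, Matrix.cons_val_fin_one]
    ring

theorem expA_expA (s t : ℝ) (v : E2) : expA l m t (expA l m s v) = expA l m (s + t) v := by
  ext i
  fin_cases i <;>
  · simp only [expA, rotMap, vec2, PiLp.smul_apply, smul_eq_mul, Fin.zero_eta, Fin.mk_one,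
      Matrix.cons_val_zero, Matrix.cons_val_one, Matrix.cons_val_fin_one, add_mul, exp_add,
      cos_add, sin_add]
    ring

theorem expA_zero (v : E2) : expA l m 0 v = v := by
  ext i; fin_cases i <;> simp [expA, rotMap, vec2]

variable {η : E2} {u : ℝ}

theorem phi_phi (s t : ℝ) (v : E2) : phi l m η t (phi l m η s v u) u = phi l m η (s + t) v u := by
  rw [phi, phi, add_sub_cancel_right, expA_expA, phi]

theorem phi_zero (v : E2) : phi l m η 0 v u = v := by
  rw [phi, expA_zero, sub_add_cancel]

theorem dist_phi_phi (s : ℝ) (v w : E2) :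
    dist (phi l m η s v u) (phi l m η s w u) = exp (s * l) * dist v w := by
  rw [dist_eq_norm, dist_eq_norm, phi, phi, add_sub_add_right_eq_sub, expA_sub,
    sub_sub_sub_cancel_right, norm_expA]

end LinearFlow

section Region

variable {l m : ℝ}

theorem inner_sub_phiA_eq (hm : 0 < m) (τ : ℝ) (v v₁ v₂ : E2) :
    ⟪v - phiA l m τ v₁ v₂, thetaMap (Amap l m (expA l m τ (v₁ - v₂)))⟫ =
      exp (τ * l) * m * (⟪v₁ - v₂, v₁ - v₂⟫ * exp (l / m * (τ * m)) -
        Spiral.tangentForm (l / m) 0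
          (-(⟪v - v₂, v₁ - v₂⟫, ⟪v - v₂, thetaMap (v₁ - v₂)⟫)) (τ * m)) := by
  obtain ⟨a, rfl⟩ : ∃ a, l = a * m := ⟨l / m, by field_simp⟩
  rw [mul_div_cancel_right₀ a hm.ne', show a * (τ * m) = τ * (a * m) by ring]
  simp only [phiA, expA, rotMap, thetaMap, Amap, vec2, E2.inner_eq, Spiral.tangentForm,
    PiLp.add_apply, PiLp.sub_apply, PiLp.smul_apply, PiLp.toLp_apply, smul_eq_mul,
    Matrix.cons_val_zero, Matrix.cons_val_one, Prod.fst_neg, Prod.snd_neg, sub_zero]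
  linear_combination exp (τ * (a * m)) ^ 2 * m *
    ((v₁ 0 - v₂ 0) ^ 2 + (v₁ 1 - v₂ 1) ^ 2) * sin_sq_add_cos_sq (τ * m)

theorem mem_CA_iff (hm : 0 < m) (v v₁ v₂ : E2) :
    v ∈ CA l m v₁ v₂ ↔ 0 ≤ ⟪v - v₂, thetaMap (v₁ - v₂)⟫ ∧
      Spiral.UnderTangents (l / m) 0 ⟪v₁ - v₂, v₁ - v₂⟫
        (-(⟪v - v₂, v₁ - v₂⟫, ⟪v - v₂, thetaMap (v₁ - v₂)⟫)) := by
  refine and_congr Iff.rfl ⟨fun h t ht => ?_, fun h τ hτ => ?_⟩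
  · have hτ : t / m ∈ Icc 0 (π / m) :=
      ⟨div_nonneg ht.1 hm.le, div_le_div_of_nonneg_right ht.2 hm.le⟩
    have := h (t / m) hτ
    rwa [inner_sub_phiA_eq hm, mul_nonneg_iff_of_pos_left (by positivity), sub_nonneg,
      div_mul_cancel₀ t hm.ne'] at this
  · rw [inner_sub_phiA_eq hm, mul_nonneg_iff_of_pos_left (by positivity), sub_nonneg]
    exact h (τ * m) ⟨mul_nonneg hτ.1 hm.le, (le_div_iff₀ hm).1 hτ.2⟩

end Region

section Coordinates

variable {l m : ℝ} {η : E2} {um up : ℝ}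

def spiralCoords (l m : ℝ) (η : E2) (um up : ℝ) (v : E2) : ℝ × ℝ :=
  (⟪v - equil l m η ((um + up) / 2), AinvMap l m η⟫,
    ⟪v - equil l m η ((um + up) / 2), thetaMap (AinvMap l m η)⟫)

def regionK (l m : ℝ) (η : E2) (um up : ℝ) : ℝ :=
  (up - um) / 2 * ⟪AinvMap l m η, AinvMap l m η⟫

def regionD (l m : ℝ) (η : E2) (um up : ℝ) : ℝ :=
  (up - um) / (1 - rho l m) * ⟪AinvMap l m η, AinvMap l m η⟫

theorem rho_lt_one (hl : l < 0) (hm : 0 < m) : rho l m < 1 :=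
  exp_lt_one_iff.2 (div_neg_of_neg_of_pos (mul_neg_of_pos_of_neg pi_pos hl) hm)

theorem regionK_nonneg (hu : um ≤ up) : 0 ≤ regionK l m η um up :=
  mul_nonneg (by linarith) real_inner_self_nonneg

theorem two_mul_regionK (hl : l < 0) (hm : 0 < m) :
    2 * regionK l m η um up = regionD l m η um up * (1 - exp (l / m * π)) := by
  have hρ : 1 - rho l m ≠ 0 := (sub_pos.2 (rho_lt_one hl hm)).ne'
  rw [regionK, regionD, show l / m * π = π * l / m by ring, ← rho]
  field_simp

theorem Pplus_sub_equil (hl : l < 0) (hm : 0 < m) :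
    Pplus l m η um up - equil l m η um = -((up - um) / (1 - rho l m)) • AinvMap l m η := by
  have hρ : 1 - rho l m ≠ 0 := (sub_pos.2 (rho_lt_one hl hm)).ne'
  rw [Pplus, equil, ← sub_smul]
  congr 1
  field_simp
  ring

theorem Pminus_sub_equil (hl : l < 0) (hm : 0 < m) :
    Pminus l m η um up - equil l m η up = ((up - um) / (1 - rho l m)) • AinvMap l m η := by
  have hρ : 1 - rho l m ≠ 0 := (sub_pos.2 (rho_lt_one hl hm)).ne'
  rw [Pminus, equil, ← sub_smul]
  congr 1
  field_simp
  ring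

theorem mem_CA_Pplus_iff (hl : l < 0) (hm : 0 < m) (hu : um < up) (v : E2) :
    v ∈ CA l m (Pplus l m η um up) (equil l m η um) ↔
      (spiralCoords l m η um up v).2 ≤ 0 ∧
        Spiral.UnderTangents (l / m) (regionK l m η um up) (regionD l m η um up)
          (spiralCoords l m η um up v) := by
  set r := (up - um) / (1 - rho l m)
  have hr : 0 < r := div_pos (by linarith) (by linarith [rho_lt_one hl hm])
  have hY : ⟪v - equil l m η um, thetaMap (-r • AinvMap l m η)⟫ =
      r * -(spiralCoords l m η um up v).2 := by
    simp only [spiralCoords, equil, thetaMap, vec2, E2.inner_eq, PiLp.sub_apply,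
      PiLp.smul_apply, smul_eq_mul, Matrix.cons_val_zero, Matrix.cons_val_one]
    ring
  rw [mem_CA_iff hm, Pplus_sub_equil hl hm, hY, mul_nonneg_iff_of_pos_left hr, neg_nonneg]
  refine and_congr Iff.rfl (Spiral.underTangents_iff_of_eq_smul hr ?_ ?_ ?_) <;>
  · simp only [spiralCoords, regionK, regionD, equil, thetaMap, vec2, E2.inner_eq,
      PiLp.sub_apply, PiLp.smul_apply, smul_eq_mul, Matrix.cons_val_zero, Matrix.cons_val_one,
      Prod.fst_neg, Prod.snd_neg]
    ring

theorem mem_CA_Pminus_iff (hl : l < 0) (hm : 0 < m) (hu : um < up) (v : E2) :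
    v ∈ CA l m (Pminus l m η um up) (equil l m η up) ↔
      0 ≤ (spiralCoords l m η um up v).2 ∧
        Spiral.UnderTangents (l / m) (regionK l m η um up) (regionD l m η um up)
          (-spiralCoords l m η um up v) := by
  set r := (up - um) / (1 - rho l m)
  have hr : 0 < r := div_pos (by linarith) (by linarith [rho_lt_one hl hm])
  have hY : ⟪v - equil l m η up, thetaMap (r • AinvMap l m η)⟫ =
      r * (spiralCoords l m η um up v).2 := by
    simp only [spiralCoords, equil, thetaMap, vec2, E2.inner_eq, PiLp.sub_apply,
      PiLp.smul_apply, smul_eq_mul, Matrix.cons_val_zero, Matrix.cons_val_one]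
    ring
  rw [mem_CA_iff hm, Pminus_sub_equil hl hm, hY, mul_nonneg_iff_of_pos_left hr]
  refine and_congr Iff.rfl (Spiral.underTangents_iff_of_eq_smul hr ?_ ?_ ?_) <;>
  · simp only [spiralCoords, regionK, regionD, equil, thetaMap, vec2, E2.inner_eq,
      PiLp.sub_apply, PiLp.smul_apply, smul_eq_mul, Matrix.cons_val_zero, Matrix.cons_val_one,
      Prod.fst_neg, Prod.snd_neg]
    ring

theorem spiralCoords_phi (hm : 0 < m) (s u : ℝ) (v : E2) :
    spiralCoords l m η um up (phi l m η s v u) =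
      Spiral.flow (l / m) ((u - (um + up) / 2) * ⟪AinvMap l m η, AinvMap l m η⟫) (s * m)
        (spiralCoords l m η um up v) := by
  rw [Spiral.flow, show l / m * (s * m) = s * l by field_simp]
  simp only [spiralCoords, phi, expA, rotMap, equil, thetaMap, vec2, E2.inner_eq,
    PiLp.add_apply, PiLp.sub_apply, PiLp.smul_apply, smul_eq_mul,
    Matrix.cons_val_zero, Matrix.cons_val_one, Prod.mk.injEq]
  constructor <;> ring

theorem mem_regionC_iff (hl : l < 0) (hm : 0 < m) (hu : um < up) (v : E2) :
    v ∈ regionC l m η um up ↔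
      Spiral.InRegion (l / m) (regionK l m η um up) (regionD l m η um up)
        (spiralCoords l m η um up v) := by
  rw [regionC, mem_union, mem_CA_Pplus_iff hl hm hu, mem_CA_Pminus_iff hl hm hu,
    Spiral.inRegion_iff (div_neg_of_neg_of_pos hl hm) (regionK_nonneg hu.le)
      (two_mul_regionK hl hm)]

end Coordinates

theorem phi_mem_regionC {l m : ℝ} (hl : l < 0) (hm : 0 < m) {η : E2} {um up : ℝ} (hu : um < up)
    {u : ℝ} (huΩ : u ∈ Icc um up) {s : ℝ} (hs : 0 ≤ s) {v : E2} (hv : v ∈ regionC l m η um up) :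
    phi l m η s v u ∈ regionC l m η um up := by
  rw [mem_regionC_iff hl hm hu] at hv ⊢
  rw [spiralCoords_phi hm]
  refine Spiral.inRegion_flow (two_mul_regionK hl hm) ?_ (mul_nonneg hs hm.le) hv
  rw [regionK, abs_mul, abs_of_nonneg real_inner_self_nonneg]
  exact mul_le_mul_of_nonneg_right (abs_le.2 ⟨by linarith [huΩ.1], by linarith [huΩ.2]⟩)
    real_inner_self_nonneg

theorem infDist_phi_regionC_le {l m : ℝ} (hl : l < 0) (hm : 0 < m) {η : E2} {um up : ℝ}
    (hu : um < up) {u : ℝ} (huΩ : u ∈ Icc um up) {s : ℝ} (hs : 0 ≤ s) (v : E2) :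
    Metric.infDist (phi l m η s v u) (regionC l m η um up) ≤
      exp (s * l) * Metric.infDist v (regionC l m η um up) :=
  Metric.infDist_apply_le_of_mapsTo (exp_pos _).le
    (fun _ hc => phi_mem_regionC hl hm hu huΩ hs hc) v fun c _ => (dist_phi_phi s v c).le

theorem stmt12_general (l m : ℝ) (hl : l < 0) (hm : 0 < m) (η : E2)
    (um up : ℝ) (hu : um < up) (v : E2)
    (u : ℝ) (huΩ : u ∈ Icc um up) :
    (∀ s : ℝ, 0 ≤ s →
      Metric.infDist (phi l m η s v u) (regionC l m η um up) ≤
        Real.exp (s * l) * Metric.infDist v (regionC l m η um up)) ∧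
    ∀ s : ℝ, s ≤ 0 →
      Real.exp (s * l) * Metric.infDist v (regionC l m η um up) ≤
        Metric.infDist (phi l m η s v u) (regionC l m η um up) := by
  refine ⟨fun s hs => infDist_phi_regionC_le hl hm hu huΩ hs v, fun s hs => ?_⟩
  have h := infDist_phi_regionC_le (η := η) hl hm hu huΩ (neg_nonneg.2 hs) (phi l m η s v u)
  rw [phi_phi, add_neg_cancel, phi_zero] at h
  calc exp (s * l) * Metric.infDist v (regionC l m η um up)
      ≤ exp (s * l) * (exp (-s * l) * Metric.infDist (phi l m η s v u) (regionC l m η um up)) :=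
        mul_le_mul_of_nonneg_left h (exp_pos _).le
    _ = Metric.infDist (phi l m η s v u) (regionC l m η um up) := by
        rw [← mul_assoc, ← exp_add, neg_mul, add_neg_cancel, exp_zero, one_mul]

/-- distance estimates to `C` along solutions with constant control. -/
theorem stmt12 (l m : ℝ) (hl : l < 0) (hm : 0 < m) (η : E2) (hη : η ≠ 0)
    (um up : ℝ) (hu : um < up) (v : E2) (hv : v ∉ regionC l m η um up)
    (u : ℝ) (huΩ : u ∈ Icc um up) :
    (∀ s : ℝ, 0 ≤ s →
      Metric.infDist (phi l m η s v u) (regionC l m η um up) ≤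
        Real.exp (s * l) * Metric.infDist v (regionC l m η um up)) ∧
    ∀ s : ℝ, s ≤ 0 →
      Real.exp (s * l) * Metric.infDist v (regionC l m η um up) ≤
        Metric.infDist (phi l m η s v u) (regionC l m η um up) :=
  stmt12_general l m hl hm η um up hu v u huΩ
end
end

section
/- Let λ, μ ∈ ℝ with μ > 0, let A = ((λ, −μ), (μ, λ)), let η ∈ ℝ² be nonzero, and let the control range Ω ⊆ ℝ be an interval that is unbounded (above or below). Then the linear control system ẋ = Ax + uη, u ∈ Ω, is controllable: for all v, w ∈ ℝ², one has w ∈ R⁺(v). -/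
noncomputable section

open Real Set RealInnerProductSpace

/-!
A half turn `e^{(π/μ)A}` is `-ρ` with `ρ = e^{πλ/μ}`, so two consecutive half turns with
controls `u₁, u₂` send `v` to `ρ² v + (1 + ρ)(ρ u₁ - u₂) A⁻¹η`. On an unbounded interval
`ρ u₁ - u₂` takes every real value, hence the whole line `ρ² v + ℝ A⁻¹η` is reachable from `v`.
A quarter turn `e^{(π/2μ)A} = e^{πλ/2μ} θ` carries the direction `A⁻¹η` to `θ A⁻¹η`, and
`A⁻¹η, θ A⁻¹η` span the plane; so half turns, a quarter turn and half turns again reach every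
point.
-/

section OrdConnected

variable {α : Type*} [LinearOrder α] {s : Set α} {a : α}

lemma Set.OrdConnected.Ici_subset_of_not_bddAbove (hs : s.OrdConnected) (ha : a ∈ s)
    (h : ¬BddAbove s) : Ici a ⊆ s := fun x hx ↦ by
  obtain ⟨y, hy, hxy⟩ := not_bddAbove_iff.mp h x
  exact hs.out ha hy ⟨hx, hxy.le⟩

lemma Set.OrdConnected.Iic_subset_of_not_bddBelow (hs : s.OrdConnected) (ha : a ∈ s)
    (h : ¬BddBelow s) : Iic a ⊆ s := fun x hx ↦ by
  obtain ⟨y, hy, hyx⟩ := not_bddBelow_iff.mp h x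
  exact hs.out hy ha ⟨hyx.le, hx⟩

end OrdConnected

lemma exists_mul_sub_eq_of_ordConnected {Ω : Set ℝ} (hΩ : Ω.OrdConnected)
    (hunb : ¬BddAbove Ω ∨ ¬BddBelow Ω) {ρ : ℝ} (hρ : 0 < ρ) (t : ℝ) :
    ∃ u₁ ∈ Ω, ∃ u₂ ∈ Ω, ρ * u₁ - u₂ = t := by
  rcases hunb with h | h
  · obtain ⟨a, ha, -⟩ := not_bddAbove_iff.mp h 0
    have hsub := hΩ.Ici_subset_of_not_bddAbove ha h
    have hu₁ : (t + a) / ρ ≤ max a ((t + a) / ρ) := le_max_right _ _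
    rw [div_le_iff₀ hρ] at hu₁
    refine ⟨max a ((t + a) / ρ), hsub (mem_Ici.mpr (le_max_left _ _)), ρ * max a ((t + a) / ρ) - t,
      hsub ?_, by ring⟩
    simp only [mem_Ici]; linarith
  · obtain ⟨a, ha, -⟩ := not_bddBelow_iff.mp h 0
    have hsub := hΩ.Iic_subset_of_not_bddBelow ha h
    have hu₁ : min a ((t + a) / ρ) ≤ (t + a) / ρ := min_le_right _ _
    rw [le_div_iff₀ hρ] at hu₁
    refine ⟨min a ((t + a) / ρ), hsub (mem_Iic.mpr (min_le_left _ _)), ρ * min a ((t + a) / ρ) - t,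
      hsub ?_, by ring⟩
    simp only [mem_Iic]; linarith

lemma thetaMap_smul (r : ℝ) (v : E2) : thetaMap (r • v) = r • thetaMap v := by
  ext i; fin_cases i <;> simp [thetaMap, vec2]

lemma rotMap_add (φ : ℝ) (v w : E2) : rotMap φ (v + w) = rotMap φ v + rotMap φ w := by
  ext i; fin_cases i <;> simp [rotMap, vec2] <;> ring

lemma rotMap_pi (v : E2) : rotMap π v = -v := by
  ext i; fin_cases i <;> simp [rotMap, vec2]

lemma rotMap_pi_div_two (v : E2) : rotMap (π / 2) v = thetaMap v := by
  ext i; fin_cases i <;> simp [rotMap, thetaMap, vec2]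

lemma exists_eq_smul_thetaMap_add_smul {c : E2} (hc : c ≠ 0) (d : E2) :
    ∃ a b : ℝ, d = a • thetaMap c + b • c := by
  have hc' : c 0 ^ 2 + c 1 ^ 2 ≠ 0 := by
    contrapose! hc
    ext i; fin_cases i <;> simp <;> nlinarith [sq_nonneg (c 0), sq_nonneg (c 1)]
  refine ⟨(d 1 * c 0 - d 0 * c 1) / (c 0 ^ 2 + c 1 ^ 2),
    (d 0 * c 0 + d 1 * c 1) / (c 0 ^ 2 + c 1 ^ 2), ?_⟩
  ext i; fin_cases i <;> simp [thetaMap, vec2] <;> field_simp <;> ring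

section Spiral

variable {l m : ℝ} {η : E2}

lemma Amap_AinvMap (h : l ^ 2 + m ^ 2 ≠ 0) (v : E2) : Amap l m (AinvMap l m v) = v := by
  ext i; fin_cases i <;> simp [Amap, AinvMap, vec2] <;> field_simp <;> ring

lemma AinvMap_ne_zero (hm : m ≠ 0) (hη : η ≠ 0) : AinvMap l m η ≠ 0 := by
  intro h
  have hA := Amap_AinvMap (l := l) (by positivity) η
  rw [h] at hA
  exact hη (hA.symm.trans (by ext i; fin_cases i <;> simp [Amap, vec2]))

lemma expA_add (s : ℝ) (v w : E2) : expA l m s (v + w) = expA l m s v + expA l m s w := by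
  simp only [expA, rotMap_add, smul_add]

lemma expA_pi_div (hm : m ≠ 0) (v : E2) : expA l m (π / m) v = -rho l m • v := by
  rw [expA, div_mul_cancel₀ _ hm, rotMap_pi, rho, div_mul_eq_mul_div, smul_neg, neg_smul]

lemma expA_pi_div_two_mul (hm : m ≠ 0) (v : E2) :
    expA l m (π / (2 * m)) v = Real.exp (π * l / (2 * m)) • thetaMap v := by
  rw [expA, show π / (2 * m) * m = π / 2 by field_simp, rotMap_pi_div_two, div_mul_eq_mul_div]

lemma phi_add (s : ℝ) (v w : E2) (u : ℝ) :
    phi l m η s (v + w) u = phi l m η s v u + expA l m s w := by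
  rw [phi, phi, add_sub_right_comm, expA_add]
  abel

lemma phi_pi_div (hm : m ≠ 0) (v : E2) (u : ℝ) :
    phi l m η (π / m) v u = -rho l m • v - ((1 + rho l m) * u) • AinvMap l m η := by
  rw [phi, expA_pi_div hm, equil]
  module

lemma trajComp_halfTurns (hm : m ≠ 0) (v : E2) (u₁ u₂ : ℝ) :
    trajComp l m η v [(π / m, u₁), (π / m, u₂)] =
      rho l m ^ 2 • v + ((1 + rho l m) * (rho l m * u₁ - u₂)) • AinvMap l m η := by
  simp only [trajComp, phi_pi_div hm]
  module

end Spiral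

section Reachability

variable {l m : ℝ} {η : E2} {Ω : Set ℝ}

lemma trajComp_append (v : E2) (L₁ L₂ : List (ℝ × ℝ)) :
    trajComp l m η v (L₁ ++ L₂) = trajComp l m η (trajComp l m η v L₁) L₂ := by
  induction L₁ generalizing v with
  | nil => rfl
  | cons p L ih => exact ih _

lemma reachPlus_trans {u v w : E2} (hv : v ∈ ReachPlus l m η Ω u)
    (hw : w ∈ ReachPlus l m η Ω v) : w ∈ ReachPlus l m η Ω u := by
  obtain ⟨L₁, hL₁, rfl⟩ := hv
  obtain ⟨L₂, hL₂, rfl⟩ := hw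
  refine ⟨L₁ ++ L₂, fun p hp ↦ ?_, (trajComp_append u L₁ L₂).symm⟩
  rcases List.mem_append.mp hp with hp | hp
  exacts [hL₁ p hp, hL₂ p hp]

lemma phi_mem_reachPlus {s u : ℝ} (hs : 0 ≤ s) (hu : u ∈ Ω) (v : E2) :
    phi l m η s v u ∈ ReachPlus l m η Ω v :=
  ⟨[(s, u)], by simpa using ⟨hs, hu⟩, rfl⟩

lemma rho_sq_smul_add_smul_AinvMap_mem_reachPlus (hm : 0 < m) (hΩ : Ω.OrdConnected)
    (hunb : ¬BddAbove Ω ∨ ¬BddBelow Ω) (v : E2) (t : ℝ) :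
    rho l m ^ 2 • v + t • AinvMap l m η ∈ ReachPlus l m η Ω v := by
  have hρ : 0 < rho l m := Real.exp_pos _
  obtain ⟨u₁, hu₁, u₂, hu₂, hu⟩ :=
    exists_mul_sub_eq_of_ordConnected hΩ hunb hρ (t / (1 + rho l m))
  have hπm : 0 ≤ π / m := by positivity
  refine ⟨[(π / m, u₁), (π / m, u₂)], by simpa using ⟨⟨hπm, hu₁⟩, hπm, hu₂⟩, ?_⟩
  rw [trajComp_halfTurns hm.ne', hu, mul_div_cancel₀ _ (by positivity)]

end Reachability

/-- if the control range `Ω` is an unbounded interval, the system is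
controllable. -/
theorem stmt16 (l m : ℝ) (hm : 0 < m) (η : E2) (hη : η ≠ 0)
    (Ω : Set ℝ) (hΩ : Ω.OrdConnected) (hunb : ¬BddAbove Ω ∨ ¬BddBelow Ω) :
    ∀ v w : E2, w ∈ ReachPlus l m η Ω v := by
  intro v w
  set ρ := rho l m
  set c := AinvMap l m η
  have hρ : 0 < ρ := Real.exp_pos _
  obtain ⟨u₀, hu₀⟩ : Ω.Nonempty := by
    rcases Ω.eq_empty_or_nonempty with rfl | h
    · simp at hunb
    · exact h
  obtain ⟨a, b, hab⟩ := exists_eq_smul_thetaMap_add_smul (AinvMap_ne_zero (l := l) hm.ne' hη)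
    (w - ρ ^ 2 • phi l m η (π / (2 * m)) (ρ ^ 2 • v) u₀)
  set v₁ := ρ ^ 2 • v + (a / (ρ ^ 2 * Real.exp (π * l / (2 * m)))) • c
  set v₂ := phi l m η (π / (2 * m)) v₁ u₀
  have hv₁ : v₁ ∈ ReachPlus l m η Ω v :=
    rho_sq_smul_add_smul_AinvMap_mem_reachPlus hm hΩ hunb v _
  have hv₂ : v₂ ∈ ReachPlus l m η Ω v₁ := phi_mem_reachPlus (by positivity) hu₀ v₁
  have hw : ρ ^ 2 • v₂ + b • c ∈ ReachPlus l m η Ω v₂ :=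
    rho_sq_smul_add_smul_AinvMap_mem_reachPlus hm hΩ hunb v₂ b
  have hv₂w : ρ ^ 2 • v₂ + b • c = w := by
    have hexp := mul_div_cancel₀ a (by positivity : ρ ^ 2 * Real.exp (π * l / (2 * m)) ≠ 0)
    simp only [v₂, v₁]
    rw [phi_add, expA_pi_div_two_mul hm.ne', thetaMap_smul, smul_add, smul_smul, smul_smul,
      hexp, add_assoc, ← hab, add_sub_cancel]
  exact reachPlus_trans (reachPlus_trans hv₁ hv₂) (hv₂w ▸ hw)
end
end
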